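/- arXiv:2503.14656 — 4 statements merged into one kernel-verified Lean document; each statement's English description precedes it below -/
import Mathlib

section
/- Let α : ℝ → ℝ be continuous, strictly increasing, with α(0) = 0 and α(s) < s for every s > 0, and let b : ℕ → ℝ be a sequence satisfying b(t+1) - b(t) ≥ -α(b(t)) for all t ∈ ℕ. If b(0) ≥ 0, then b(t) ≥ 0 for all t ∈ ℕ. (Forward invariance of the safe set under a first-order discrete-time CBF condition: if h is a discrete-time CBF for the system x(t+1) = f(x(t),u(t)) and the applied inputs satisfy Δh(x(t),u(t)) ≥ -α(h(x(t))) at every time step, then the superlevel set {x : h(x) ≥ 0} is forward invariant along the resulting trajectory.) -/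
/-- Forward invariance of the safe set under a first-order discrete-time CBF condition:
if `α` is a class-K function with `α s < s` for `s > 0`, and the sequence `b t = h (x t)`
satisfies the discrete-time CBF condition `b (t+1) - b t ≥ -α (b t)` at every step with
`b 0 ≥ 0`, then `b t ≥ 0` for all `t`. -/
theorem dt_cbf_forward_invariance
    (α : ℝ → ℝ) (hα_cont : Continuous α) (hα_mono : StrictMono α)
    (hα_zero : α 0 = 0) (hα_lt : ∀ s > 0, α s < s)
    (b : ℕ → ℝ) (hcbf : ∀ t : ℕ, b (t + 1) - b t ≥ -α (b t))
    (hb0 : b 0 ≥ 0) :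
    ∀ t : ℕ, b t ≥ 0 := by
  intro t
  induction t with
  | zero => exact hb0
  | succ n ih =>
    have h := hcbf n
    rcases eq_or_lt_of_le ih with h0 | hpos
    · have : α (b n) = 0 := by rw [← h0, hα_zero]
      linarith
    · have := hα_lt (b n) hpos
      linarith
end

section
/- Let r ≥ 1 and let α₁, …, α_r : ℝ → ℝ each be continuous, strictly increasing, with α_a(0) = 0 and α_a(s) < s for every s > 0. Let b₀, b₁, …, b_r : ℕ → ℝ be sequences related by b_{a+1}(t) = b_a(t+1) - b_a(t) + α_{a+1}(b_a(t)) for all 0 ≤ a ≤ r-1 and all t ∈ ℕ. If b_r(t) ≥ 0 for all t ∈ ℕ and b_a(0) ≥ 0 for all 0 ≤ a ≤ r-1, then b_a(t) ≥ 0 for all 0 ≤ a ≤ r-1 and all t ∈ ℕ. (Sequence form of the higher-order discrete-time CBF theorem: the condition ψ_r(x(t),u(t)) ≥ 0 at every time step renders the intersection ⋂_{a=0}^{r-1} S_a forward invariant.) -/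
/-- Sequence form of the higher-order discrete-time CBF theorem. Here `α a` (for `a : Fin r`)
denotes the class-K function `α_{a+1}`, `b` is indexed over `Fin (r+1)` so that
`b a.castSucc = b_a` for `a : Fin r` and `b (Fin.last r) = b_r`. If
`b_{a+1}(t) = b_a(t+1) - b_a(t) + α_{a+1}(b_a(t))` for all `0 ≤ a ≤ r-1` and all `t`,
`b_r(t) ≥ 0` for all `t`, and `b_a(0) ≥ 0` for all `0 ≤ a ≤ r-1`, then `b_a(t) ≥ 0`
for all `0 ≤ a ≤ r-1` and all `t`. -/
theorem hocbf_sequence_forward_invariance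
    (r : ℕ) (hr : 1 ≤ r)
    (α : Fin r → ℝ → ℝ)
    (hα_cont : ∀ a, Continuous (α a)) (hα_mono : ∀ a, StrictMono (α a))
    (hα_zero : ∀ a, α a 0 = 0) (hα_lt : ∀ a, ∀ s > 0, α a s < s)
    (b : Fin (r + 1) → ℕ → ℝ)
    (hrec : ∀ (a : Fin r) (t : ℕ),
      b a.succ t = b a.castSucc (t + 1) - b a.castSucc t + α a (b a.castSucc t))
    (hψr : ∀ t : ℕ, b (Fin.last r) t ≥ 0)
    (hinit : ∀ a : Fin r, b a.castSucc 0 ≥ 0) :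
    ∀ (a : Fin r) (t : ℕ), b a.castSucc t ≥ 0 := by
  have key : ∀ a : Fin (r + 1), ∀ t, b a t ≥ 0 := by
    refine Fin.reverseInduction hψr ?_
    intro a ih t
    induction t with
    | zero => exact hinit a
    | succ t iht =>
      have hα_le : α a (b a.castSucc t) ≤ b a.castSucc t := by
        rcases lt_or_eq_of_le iht with h | h
        · exact le_of_lt (hα_lt a _ h)
        · rw [← h, hα_zero]
      have h1 := hrec a t
      have h2 := ih t
      linarith
  exact fun a t => key a.castSucc t
end

section
/- Let α₁, α₂ : ℝ → ℝ each be continuous, strictly increasing, with α₁(0) = α₂(0) = 0 and α₁(s) < s, α₂(s) < s for every s > 0. Let b₀ : ℕ → ℝ be a sequence and define b₁(t) := b₀(t+1) - b₀(t) + α₁(b₀(t)). Suppose b₀(0) ≥ 0, b₁(0) ≥ 0, and b₁(t+1) - b₁(t) + α₂(b₁(t)) ≥ 0 for all t ∈ ℕ. Then b₀(t) ≥ 0 and b₁(t) ≥ 0 for all t ∈ ℕ. (Relative-degree-2 HOCBF condition, as used for collision safety of the single rigid body locomotion model: enforcing ψ₂ ≥ 0 at every step renders S₀ ∩ S₁ forward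 invariant.) -/
/-- Relative-degree-2 HOCBF condition: with class-K functions `α₁, α₂` (satisfying `α s < s`
for `s > 0`), `b₀ t = h (x t)` and `b₁ t = b₀ (t+1) - b₀ t + α₁ (b₀ t)`, if `b₀ 0 ≥ 0`,
`b₁ 0 ≥ 0`, and the second-order HOCBF condition `b₁ (t+1) - b₁ t + α₂ (b₁ t) ≥ 0` holds at
every step, then `b₀ t ≥ 0` and `b₁ t ≥ 0` for all `t` (forward invariance of `S₀ ∩ S₁`). -/
theorem hocbf_relative_degree_two
    (α₁ α₂ : ℝ → ℝ)
    (hα₁_cont : Continuous α₁) (hα₁_mono : StrictMono α₁)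
    (hα₁_zero : α₁ 0 = 0) (hα₁_lt : ∀ s > 0, α₁ s < s)
    (hα₂_cont : Continuous α₂) (hα₂_mono : StrictMono α₂)
    (hα₂_zero : α₂ 0 = 0) (hα₂_lt : ∀ s > 0, α₂ s < s)
    (b₀ b₁ : ℕ → ℝ)
    (hb₁_def : ∀ t : ℕ, b₁ t = b₀ (t + 1) - b₀ t + α₁ (b₀ t))
    (hb₀0 : b₀ 0 ≥ 0) (hb₁0 : b₁ 0 ≥ 0)
    (hψ₂ : ∀ t : ℕ, b₁ (t + 1) - b₁ t + α₂ (b₁ t) ≥ 0) :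
    ∀ t : ℕ, b₀ t ≥ 0 ∧ b₁ t ≥ 0 := by
  have hle₁ : ∀ s : ℝ, 0 ≤ s → α₁ s ≤ s := by
    intro s hs
    rcases eq_or_lt_of_le hs with h | h
    · simp [← h, hα₁_zero]
    · exact (hα₁_lt s h).le
  have hle₂ : ∀ s : ℝ, 0 ≤ s → α₂ s ≤ s := by
    intro s hs
    rcases eq_or_lt_of_le hs with h | h
    · simp [← h, hα₂_zero]
    · exact (hα₂_lt s h).le
  intro t
  induction t with
  | zero => exact ⟨hb₀0, hb₁0⟩
  | succ n ih =>
    obtain ⟨h0, h1⟩ := ih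
    constructor
    · have := hb₁_def n
      have := hle₁ (b₀ n) h0
      linarith
    · have := hψ₂ n
      have := hle₂ (b₁ n) h1
      linarith
end

section
/- Let n, m ∈ ℕ, r ≥ 1, f : (Fin n → ℝ) → (Fin m → ℝ) → (Fin n → ℝ), and let x : ℕ → (Fin n → ℝ), u : ℕ → (Fin m → ℝ) satisfy x(t+1) = f (x(t)) (u(t)) for all t. Let α₁, …, α_r : ℝ → ℝ each be continuous, strictly increasing, with α_a(0) = 0 and α_a(s) < s for every s > 0, and let ψ₀, …, ψ_{r-1} : (Fin n → ℝ) → ℝ satisfy, along the trajectory, ψ_{a+1}(x(t)) = ψ_a(x(t+1)) - ψ_a(x(t)) + α_{a+1}(ψ_a(x(t))) for all 0 ≤ a ≤ r-2 and all t. Suppose the HOCBF condition ψ_{r-1}(x(t+1)) - ψ_{r-1}(x(t)) + α_r(ψ_{r-1}(x(t))) ≥ 0 holds for all t, and x(0) ∈ ⋂_{a=0}^{r-1} S_a, where S_a := {z : ψ_a(z) ≥ 0}. Then x(t) ∈ ⋂_{a=0}^{r-1} S_a for all t ∈ ℕ. -/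
/-- Higher-order discrete-time CBF theorem for a control system `x (t+1) = f (x t) (u t)`.
Here `ψ a` (for `a : Fin r`) denotes `ψ_a` for `0 ≤ a ≤ r-1`, and `α a` denotes the class-K
function `α_{a+1}` for `0 ≤ a ≤ r-1` (so `α ⟨r-1,_⟩ = α_r`). If the auxiliary-function
recurrence holds along the trajectory, the HOCBF condition
`ψ_{r-1}(x(t+1)) - ψ_{r-1}(x(t)) + α_r(ψ_{r-1}(x(t))) ≥ 0` holds at every step, and
`x 0 ∈ ⋂_{a=0}^{r-1} S_a` with `S_a := {z | ψ_a z ≥ 0}`, then `x t ∈ ⋂_{a=0}^{r-1} S_a`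
for all `t`. -/
theorem hocbf_trajectory_forward_invariance
    (n m r : ℕ) (hr : 1 ≤ r)
    (f : (Fin n → ℝ) → (Fin m → ℝ) → (Fin n → ℝ))
    (x : ℕ → (Fin n → ℝ)) (u : ℕ → (Fin m → ℝ))
    (hdyn : ∀ t : ℕ, x (t + 1) = f (x t) (u t))
    (α : Fin r → ℝ → ℝ)
    (hα_cont : ∀ a, Continuous (α a)) (hα_mono : ∀ a, StrictMono (α a))
    (hα_zero : ∀ a, α a 0 = 0) (hα_lt : ∀ a, ∀ s > 0, α a s < s)
    (ψ : Fin r → (Fin n → ℝ) → ℝ)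
    (hrec : ∀ (a : ℕ) (h : a + 1 < r) (t : ℕ),
      ψ ⟨a + 1, h⟩ (x t) =
        ψ ⟨a, Nat.lt_of_succ_lt h⟩ (x (t + 1)) - ψ ⟨a, Nat.lt_of_succ_lt h⟩ (x t) +
          α ⟨a, Nat.lt_of_succ_lt h⟩ (ψ ⟨a, Nat.lt_of_succ_lt h⟩ (x t)))
    (hhocbf : ∀ t : ℕ,
      ψ ⟨r - 1, Nat.sub_lt hr Nat.one_pos⟩ (x (t + 1)) -
        ψ ⟨r - 1, Nat.sub_lt hr Nat.one_pos⟩ (x t) +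
        α ⟨r - 1, Nat.sub_lt hr Nat.one_pos⟩ (ψ ⟨r - 1, Nat.sub_lt hr Nat.one_pos⟩ (x t)) ≥ 0)
    (hinit : x 0 ∈ ⋂ a : Fin r, {z : Fin n → ℝ | ψ a z ≥ 0}) :
    ∀ t : ℕ, x t ∈ ⋂ a : Fin r, {z : Fin n → ℝ | ψ a z ≥ 0} := by

  simp only [Set.mem_iInter, Set.mem_setOf_eq] at hinit ⊢
  -- key step lemma
  have step : ∀ (a : Fin r),
      (∀ t : ℕ, ψ a (x (t + 1)) - ψ a (x t) + α a (ψ a (x t)) ≥ 0) →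
      ψ a (x 0) ≥ 0 → ∀ t : ℕ, ψ a (x t) ≥ 0 := by
    intro a hcond h0 t
    induction t with
    | zero => exact h0
    | succ t ih =>
      have hs : ψ a (x t) - α a (ψ a (x t)) ≥ 0 := by
        rcases lt_or_eq_of_le ih with hpos | heq
        · linarith [hα_lt a _ hpos]
        · rw [← heq, hα_zero a]; simp
      have := hcond t
      linarith
  have main : ∀ (d a : ℕ) (h : a < r), a + d = r - 1 → ∀ t, ψ ⟨a, h⟩ (x t) ≥ 0 := by
    intro d
    induction d with
    | zero =>
      intro a h ha t
      simp at ha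
      subst ha
      exact step _ hhocbf (hinit _) t
    | succ d ih =>
      intro a h ha t
      have h1 : a + 1 < r := by omega
      have hnext : ∀ t, ψ ⟨a + 1, h1⟩ (x t) ≥ 0 := ih (a + 1) h1 (by omega)
      refine step ⟨a, h⟩ (fun t => ?_) (hinit _) t
      have := hrec a h1 t
      have := hnext t
      linarith [hrec a h1 t]
  intro t a
  have ha : (a : ℕ) + (r - 1 - a) = r - 1 := by omega
  have := main (r - 1 - a) a a.isLt ha t
  simpa using this
end
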